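/- arXiv:2306.02630 — 7 statements merged into one kernel-verified Lean document; each statement's English description precedes it below -/
import Mathlib

section
/- Let X_1, …, X_K be square-integrable real random variables on a common probability space, with means μ_i := E[X_i], and set V_{ij} := Var(X_i − X_j). Define Λ'_{ij} ∈ [0, ∞] by Λ'_{ij} := V_{ij}/(μ_j − μ_i)² if μ_j > μ_i and Λ'_{ij} := +∞ otherwise. Then for all i, j, k ∈ {1, …, K}: Λ'_{ij} ≤ max{Λ'_{ik}, Λ'_{kj}}. -/
/-!
The standard deviation `√Var[X]` is the `L²` norm of the centred variable, so by Minkowski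
`σ_ij := √Var(X_i - X_j)` satisfies `σ_ij ≤ σ_ik + σ_kj`, while the gaps add up exactly:
`μ_j - μ_i = (μ_k - μ_i) + (μ_j - μ_k)`. The mediant inequality
`(x + y) / (a + b) ≤ max (x / a) (y / b)` then bounds `σ_ij / (μ_j - μ_i)`; if one of the two
gaps is not positive, the right-hand side is `⊤` anyway.
-/

open MeasureTheory ProbabilityTheory ENNReal

namespace ProbabilityTheory

variable {Ω : Type*} [MeasurableSpace Ω] {μ : Measure Ω} {X Y : Ω → ℝ}

variable (X μ) in
lemma evariance_eq_eLpNorm_sq :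
    evariance X μ = eLpNorm (fun ω ↦ X ω - μ[X]) 2 μ ^ 2 := by
  rw [eLpNorm_eq_lintegral_rpow_enorm_toReal two_ne_zero ofNat_ne_top, ← ENNReal.rpow_natCast,
    ← ENNReal.rpow_mul]
  norm_num [evariance]

variable (X μ) in
lemma sqrt_variance_eq_toReal_eLpNorm :
    √Var[X; μ] = (eLpNorm (fun ω ↦ X ω - μ[X]) 2 μ).toReal := by
  rw [variance, evariance_eq_eLpNorm_sq, toReal_pow, Real.sqrt_sq toReal_nonneg]

lemma sqrt_variance_add_le [IsFiniteMeasure μ] (hX : MemLp X 2 μ) (hY : MemLp Y 2 μ) :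
    √Var[X + Y; μ] ≤ √Var[X; μ] + √Var[Y; μ] := by
  have hXc : MemLp (fun ω ↦ X ω - μ[X]) 2 μ := hX.sub (memLp_const _)
  have hYc : MemLp (fun ω ↦ Y ω - μ[Y]) 2 μ := hY.sub (memLp_const _)
  have hcentre : (fun ω ↦ (X + Y) ω - μ[X + Y]) =
      (fun ω ↦ X ω - μ[X]) + (fun ω ↦ Y ω - μ[Y]) := by
    rw [integral_add' (hX.integrable one_le_two) (hY.integrable one_le_two)]
    ext ω
    simp only [Pi.add_apply]
    ring
  rw [sqrt_variance_eq_toReal_eLpNorm, sqrt_variance_eq_toReal_eLpNorm,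
    sqrt_variance_eq_toReal_eLpNorm, hcentre, ← toReal_add hXc.eLpNorm_ne_top hYc.eLpNorm_ne_top]
  exact toReal_mono (add_ne_top.2 ⟨hXc.eLpNorm_ne_top, hYc.eLpNorm_ne_top⟩)
    (eLpNorm_add_le hXc.1 hYc.1 one_le_two)

end ProbabilityTheory

lemma add_div_add_le_max {x y a b : ℝ} (ha : 0 < a) (hb : 0 < b) :
    (x + y) / (a + b) ≤ max (x / a) (y / b) := by
  have hx : x ≤ max (x / a) (y / b) * a := (div_le_iff₀ ha).1 (le_max_left _ _)
  have hy : y ≤ max (x / a) (y / b) * b := (div_le_iff₀ hb).1 (le_max_right _ _)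
  rw [div_le_iff₀ (add_pos ha hb)]
  linarith

noncomputable def gapRatio (v d : ℝ) : ℝ≥0∞ :=
  if 0 < d then ENNReal.ofReal (v / d ^ 2) else ⊤

lemma gapRatio_add_le_max {v v₁ v₂ d₁ d₂ : ℝ} (hv : 0 ≤ v) (hv₁ : 0 ≤ v₁) (hv₂ : 0 ≤ v₂)
    (hsqrt : √v ≤ √v₁ + √v₂) :
    gapRatio v (d₁ + d₂) ≤ max (gapRatio v₁ d₁) (gapRatio v₂ d₂) := by
  unfold gapRatio
  by_cases hd₁ : 0 < d₁
  swap
  · simp [hd₁]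
  by_cases hd₂ : 0 < d₂
  swap
  · simp [hd₂]
  have hd := add_pos hd₁ hd₂
  have hsq (w d : ℝ) (hw : 0 ≤ w) : w / d ^ 2 = (√w / d) ^ 2 := by
    rw [div_pow, Real.sq_sqrt hw]
  rw [if_pos hd, if_pos hd₁, if_pos hd₂, ← ofReal_max]
  refine ofReal_le_ofReal ?_
  rw [hsq v _ hv, hsq v₁ _ hv₁, hsq v₂ _ hv₂]
  calc (√v / (d₁ + d₂)) ^ 2 ≤ max (√v₁ / d₁) (√v₂ / d₂) ^ 2 := by
        gcongr
        exact (div_le_div_of_nonneg_right hsqrt hd.le).trans (add_div_add_le_max hd₁ hd₂)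
    _ = max ((√v₁ / d₁) ^ 2) ((√v₂ / d₂) ^ 2) :=
        pow_left_monotoneOn.map_max (show 0 ≤ √v₁ / d₁ by positivity)
          (show 0 ≤ √v₂ / d₂ by positivity)

theorem ultrametric_Lambda'_general {Ω : Type*} [MeasurableSpace Ω]
    (P : Measure Ω) [IsProbabilityMeasure P] (K : ℕ)
    (X : Fin K → Ω → ℝ) (hX : ∀ i, MemLp (X i) 2 P)
    (μ : Fin K → ℝ)
    (V : Fin K → Fin K → ℝ)
    (hV : ∀ i j, V i j = variance (fun ω => X i ω - X j ω) P)
    (Λ' : Fin K → Fin K → ℝ≥0∞)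
    (hΛ' : ∀ i j, Λ' i j =
      if μ i < μ j then ENNReal.ofReal (V i j / (μ j - μ i) ^ 2) else ⊤)
    (i j k : Fin K) :
    Λ' i j ≤ max (Λ' i k) (Λ' k j) := by
  have hΛ'_eq (a b : Fin K) : Λ' a b = gapRatio (V a b) (μ b - μ a) := by
    simp only [hΛ', gapRatio, sub_pos]
  have hV_nonneg (a b : Fin K) : 0 ≤ V a b := hV a b ▸ variance_nonneg _ _
  have hsqrt : √(V i j) ≤ √(V i k) + √(V k j) := by
    have hsum : ((fun ω ↦ X i ω - X k ω) + fun ω ↦ X k ω - X j ω) = fun ω ↦ X i ω - X j ω := by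
      ext ω
      simp only [Pi.add_apply, sub_add_sub_cancel]
    rw [hV, hV, hV, ← hsum]
    exact sqrt_variance_add_le ((hX i).sub (hX k)) ((hX k).sub (hX j))
  have hgap : μ j - μ i = (μ k - μ i) + (μ j - μ k) := by ring
  rw [hΛ'_eq, hΛ'_eq, hΛ'_eq, hgap]
  exact gapRatio_add_le_max (hV_nonneg i j) (hV_nonneg i k) (hV_nonneg k j) hsqrt

/-- Ultra-metric property of the quantities `Λ'_{ij} = V_{ij}/(μ_j - μ_i)²`
(with value `+∞` when `μ_j ≤ μ_i`), where `V_{ij} = Var(X_i - X_j)`. -/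
theorem ultrametric_Lambda' {Ω : Type*} [MeasurableSpace Ω]
    (P : Measure Ω) [IsProbabilityMeasure P] (K : ℕ)
    (X : Fin K → Ω → ℝ) (hX : ∀ i, MemLp (X i) 2 P)
    (μ : Fin K → ℝ) (hμ : ∀ i, μ i = ∫ ω, X i ω ∂P)
    (V : Fin K → Fin K → ℝ)
    (hV : ∀ i j, V i j = variance (fun ω => X i ω - X j ω) P)
    (Λ' : Fin K → Fin K → ℝ≥0∞)
    (hΛ' : ∀ i j, Λ' i j =
      if μ i < μ j then ENNReal.ofReal (V i j / (μ j - μ i) ^ 2) else ⊤)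
    (i j k : Fin K) :
    Λ' i j ≤ max (Λ' i k) (Λ' k j) :=
  ultrametric_Lambda'_general P K X hX μ V hV Λ' hΛ' i j k
end

section
/- Let x ≥ 1, c ∈ (0,1), and y > 0 be real numbers such that log(x/c)/x > y. Then x < 2·log(1/(c·y))/y. -/
open Real

/-- Technical inversion lemma: if `log(x/c)/x > y` with `x ≥ 1`, `c ∈ (0,1)`,
`y > 0`, then `x < 2 log(1/(c y)) / y`. -/
theorem log_inversion (x c y : ℝ) (hx : 1 ≤ x) (hc : c ∈ Set.Ioo (0:ℝ) 1)
    (hy : 0 < y) (h : Real.log (x / c) / x > y) :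
    x < 2 * Real.log (1 / (c * y)) / y := by
  obtain ⟨hc0, hc1⟩ := hc
  have hx0 : (0:ℝ) < x := lt_of_lt_of_le one_pos hx
  have h1 : y * x < Real.log (x / c) := (lt_div_iff₀ hx0).mp h
  have h2 : Real.log (x / c) = Real.log x - Real.log c :=
    Real.log_div (ne_of_gt hx0) (ne_of_gt hc0)
  have hxy2 : (0:ℝ) < x * y / 2 := by positivity
  have h3 : Real.log (x * y / 2) ≤ x * y / 2 - 1 := Real.log_le_sub_one_of_pos hxy2
  have h4 : Real.log (x * y / 2) = Real.log x + Real.log y - Real.log 2 := by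
    rw [Real.log_div (by positivity) (by norm_num), Real.log_mul (ne_of_gt hx0) (ne_of_gt hy)]
  have h5 : Real.log (1 / (c * y)) = -(Real.log c + Real.log y) := by
    rw [one_div, Real.log_inv, Real.log_mul (ne_of_gt hc0) (ne_of_gt hy)]
  have hlog2 : Real.log 2 < 1 := by
    have := Real.log_two_lt_d9; linarith
  rw [lt_div_iff₀ hy]
  nlinarith [h1, h3]
end

section
/- Let t ≥ 2 be an integer, δ' ∈ (0,1), and α := √(log(1/δ')/(t−1)). Let μ_i < μ_j be real numbers, V ≥ 0, V̂ ≥ 0, and m̂_i, m̂_j real numbers satisfying: (i) m̂_j − m̂_i ≤ (μ_j − μ_i) + α·√(2V) + (4/3)·α², and (ii) √(V̂) ≥ √V − 2√2·α. If m̂_j − m̂_i − (3/2)·α·√(2·V̂) − 9·α² > 0, then t − 1 ≥ (1/4)·log(1/δ')·( V/(μ_j − μ_i)² + 3/(μ_j − μ_i) ). -/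
/-- If the pairwise test fires at time `t` (under the concentration
inequalities (i), (ii)), then `t - 1 ≥ (1/4) log(1/δ') (V/(μⱼ-μᵢ)² + 3/(μⱼ-μᵢ))`. -/
theorem test_fires_lower_bound (t : ℕ) (ht : 2 ≤ t)
    (δ' : ℝ) (hδ' : δ' ∈ Set.Ioo (0:ℝ) 1)
    (α : ℝ) (hα : α = Real.sqrt (Real.log (1 / δ') / ((t : ℝ) - 1)))
    (μi μj V Vh mi mj : ℝ)
    (hμ : μi < μj) (hV : 0 ≤ V) (hVh : 0 ≤ Vh)
    (h1 : mj - mi ≤ (μj - μi) + α * Real.sqrt (2 * V) + (4/3) * α ^ 2)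
    (h2 : Real.sqrt Vh ≥ Real.sqrt V - 2 * Real.sqrt 2 * α)
    (htest : mj - mi - (3/2) * α * Real.sqrt (2 * Vh) - 9 * α ^ 2 > 0) :
    (t : ℝ) - 1 ≥
      (1/4) * Real.log (1 / δ') * (V / (μj - μi) ^ 2 + 3 / (μj - μi)) := by
  obtain ⟨hδ0, hδ1⟩ := hδ'
  have hΔ : 0 < μj - μi := sub_pos.mpr hμ
  have ht1 : (2:ℝ) ≤ (t:ℝ) := by exact_mod_cast ht
  have ht0 : (0:ℝ) < (t:ℝ) - 1 := by linarith
  have hL : 0 < Real.log (1/δ') := Real.log_pos (by rw [lt_div_iff₀ hδ0]; linarith)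
  have hα0 : 0 ≤ α := hα ▸ Real.sqrt_nonneg _
  have hα2 : α ^ 2 = Real.log (1/δ') / ((t:ℝ) - 1) := by
    rw [hα, Real.sq_sqrt (div_nonneg hL.le ht0.le)]
  have h2V : Real.sqrt (2*V) ^ 2 = 2*V := Real.sq_sqrt (by positivity)
  have hsV : 0 ≤ Real.sqrt (2*V) := Real.sqrt_nonneg _
  have h22 : Real.sqrt 2 * Real.sqrt 2 = 2 := Real.mul_self_sqrt (by norm_num)
  have h2n : (0:ℝ) ≤ Real.sqrt 2 := Real.sqrt_nonneg _
  have h3 : Real.sqrt (2*V) - 4*α ≤ Real.sqrt (2*Vh) := by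
    have e1 : Real.sqrt (2*Vh) = Real.sqrt 2 * Real.sqrt Vh := Real.sqrt_mul (by norm_num) _
    have e2 : Real.sqrt (2*V) = Real.sqrt 2 * Real.sqrt V := Real.sqrt_mul (by norm_num) _
    have hm := mul_le_mul_of_nonneg_left h2 h2n
    have e3 : Real.sqrt 2 * (Real.sqrt V - 2*Real.sqrt 2*α)
        = Real.sqrt 2 * Real.sqrt V - 4*α := by
      linear_combination (-2*α) * h22
    rw [e3] at hm
    rw [e1, e2]
    linarith
  -- multiply h3 by (3/2)α and combine with htest, h1
  have hm2 := mul_le_mul_of_nonneg_left h3 (show (0:ℝ) ≤ (3/2)*α by positivity)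
  have hkey0 : α * Real.sqrt (2*V) + (10/3) * α ^ 2 < 2 * (μj - μi) := by
    nlinarith [hm2, htest, h1, sq_nonneg α]
  have hs0 : 0 ≤ α * Real.sqrt (2*V) := mul_nonneg hα0 hsV
  have hs2 : (α * Real.sqrt (2*V)) ^ 2 = 2 * α ^ 2 * V := by
    rw [mul_pow, h2V]; ring
  have hkey : α ^ 2 * V + 3 * α ^ 2 * (μj - μi) ≤ 4 * (μj - μi) ^ 2 := by
    nlinarith [hkey0, hs0, hs2, hΔ, sq_nonneg α,
      mul_nonneg hs0 (sub_nonneg.mpr hkey0.le),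
      mul_pos hΔ hΔ,
      mul_lt_mul_of_pos_left hkey0 hΔ]
  rw [ge_iff_le]
  have hΔ0 : (μj - μi) ≠ 0 := ne_of_gt hΔ
  have hrw : (1/4) * Real.log (1/δ') * (V / (μj - μi) ^ 2 + 3 / (μj - μi))
      = Real.log (1/δ') * (V + 3 * (μj - μi)) / (4 * (μj - μi) ^ 2) := by
    field_simp
  rw [hrw, div_le_iff₀ (by positivity)]
  have hLe : Real.log (1/δ') = α ^ 2 * ((t:ℝ) - 1) := by
    rw [hα2]; field_simp
  rw [hLe]
  have hfin := mul_le_mul_of_nonneg_left hkey ht0.le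
  linarith [hfin]
end

section
/- Let t ≥ 2 be an integer, δ' ∈ (0,1), and α := √(log(1/δ')/(t−1)). Let μ_i < μ_j be real numbers, V ≥ 0, V̂ ≥ 0, and m̂_i, m̂_j real numbers satisfying: (i) m̂_j − m̂_i ≥ (μ_j − μ_i) − α·√(2V) − (4/3)·α², and (ii) √(V̂) ≤ √V + 2√2·α. If m̂_j − m̂_i − (3/2)·α·√(2·V̂) − 9·α² ≤ 0, then t − 1 ≤ (25/2)·log(1/δ')·( V/(μ_j − μ_i)² + 3/(μ_j − μ_i) ). -/
/-- If the pairwise test has not fired at time `t` (under the concentration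
inequalities (i), (ii)), then
`t - 1 ≤ (25/2) log(1/δ') (V/(μⱼ-μᵢ)² + 3/(μⱼ-μᵢ))`. -/
theorem test_not_fired_upper_bound (t : ℕ) (ht : 2 ≤ t)
    (δ' : ℝ) (hδ' : δ' ∈ Set.Ioo (0:ℝ) 1)
    (α : ℝ) (hα : α = Real.sqrt (Real.log (1 / δ') / ((t : ℝ) - 1)))
    (μi μj V Vh mi mj : ℝ)
    (hμ : μi < μj) (hV : 0 ≤ V) (hVh : 0 ≤ Vh)
    (h1 : mj - mi ≥ (μj - μi) - α * Real.sqrt (2 * V) - (4/3) * α ^ 2)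
    (h2 : Real.sqrt Vh ≤ Real.sqrt V + 2 * Real.sqrt 2 * α)
    (htest : mj - mi - (3/2) * α * Real.sqrt (2 * Vh) - 9 * α ^ 2 ≤ 0) :
    (t : ℝ) - 1 ≤
      (25/2) * Real.log (1 / δ') * (V / (μj - μi) ^ 2 + 3 / (μj - μi)) := by
  obtain ⟨hδ0, hδ1⟩ := hδ'
  set L := Real.log (1 / δ') with hLdef
  have hL : 0 < L := Real.log_pos (by rw [lt_div_iff₀ hδ0]; linarith)
  have ht1 : (1:ℝ) ≤ (t:ℝ) - 1 := by
    have : (2:ℝ) ≤ (t:ℝ) := by exact_mod_cast ht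
    linarith
  have ht1' : (0:ℝ) < (t:ℝ) - 1 := by linarith
  have hαnn : 0 ≤ α := hα ▸ Real.sqrt_nonneg _
  have hα2 : α ^ 2 = L / ((t:ℝ) - 1) := by
    rw [hα, sq, Real.mul_self_sqrt (by positivity)]
  have hLα : L = α ^ 2 * ((t:ℝ) - 1) := by
    rw [hα2]; field_simp
  set Δ := μj - μi with hΔdef
  have hΔ : 0 < Δ := by simp [hΔdef]; linarith
  -- √(2 Vh) ≤ √(2 V) + 4 α
  have hsq : Real.sqrt (2 * Vh) ≤ Real.sqrt (2 * V) + 4 * α := by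
    have e1 : Real.sqrt (2 * Vh) = Real.sqrt 2 * Real.sqrt Vh :=
      Real.sqrt_mul (by norm_num) _
    have e2 : Real.sqrt (2 * V) = Real.sqrt 2 * Real.sqrt V :=
      Real.sqrt_mul (by norm_num) _
    have h22 : Real.sqrt 2 * Real.sqrt 2 = 2 :=
      Real.mul_self_sqrt (by norm_num)
    have hs2 : (0:ℝ) ≤ Real.sqrt 2 := Real.sqrt_nonneg _
    have := mul_le_mul_of_nonneg_left h2 hs2
    rw [e1, e2]
    nlinarith
  -- combine: Δ ≤ (5/2) α √(2V) + (49/3) α²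
  have hB : Δ ≤ (5/2) * α * Real.sqrt (2 * V) + (49/3) * α ^ 2 := by
    have hmul := mul_le_mul_of_nonneg_left hsq
      (by positivity : (0:ℝ) ≤ (3/2) * α)
    nlinarith
  have hsV : Real.sqrt (2 * V) ^ 2 = 2 * V := Real.sq_sqrt (by positivity)
  have hsVnn : 0 ≤ Real.sqrt (2 * V) := Real.sqrt_nonneg _
  -- key: Δ² ≤ (25/2) α² (V + 3 Δ)
  have hKey : Δ ^ 2 ≤ (25/2) * α ^ 2 * (V + 3 * Δ) := by
    have h3 := mul_le_mul_of_nonneg_left hB hΔ.le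
    nlinarith [sq_nonneg (Δ - (5/2) * α * Real.sqrt (2 * V)),
      mul_nonneg (mul_nonneg hαnn hαnn) hΔ.le]
  have hΔ2 : (0:ℝ) < Δ ^ 2 := by positivity
  have hrw : V / Δ ^ 2 + 3 / Δ = (V + 3 * Δ) / Δ ^ 2 := by
    field_simp
  rw [hrw, hLα]
  rw [← mul_div_assoc, le_div_iff₀ hΔ2]
  calc ((t:ℝ) - 1) * Δ ^ 2 ≤ ((t:ℝ) - 1) * ((25/2) * α ^ 2 * (V + 3 * Δ)) :=
        mul_le_mul_of_nonneg_left hKey ht1'.le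
    _ = 25 / 2 * (α ^ 2 * ((t:ℝ) - 1)) * (V + 3 * Δ) := by ring
end

section
/- Let t ≥ 2 be an integer, δ' ∈ (0,1), and α := √(log(1/δ')/(t−1)). Let μ_i < μ_j be real numbers, V ≥ 0, V̂ ≥ 0, and m̂_i, m̂_j real numbers satisfying: (i) m̂_j − m̂_i ≤ (μ_j − μ_i) + α·√(2·f(α)·V̂), and (ii) V ≤ f(α)·V̂. If m̂_j − m̂_i − (3/2)·α·√(2·f(α)·V̂) > 0, then t − 1 ≥ (1/2)·log(1/δ')·V/(μ_j − μ_i)². -/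
/-- Gaussian case: if the pairwise test fires at time `t` (under the
concentration inequalities (i), (ii)), then
`t - 1 ≥ (1/2) log(1/δ') V/(μⱼ-μᵢ)²`. Here `f(x) = exp(2x+1)` if `x ≥ 1/3`
and `f(x) = 1/(1-2x)` if `0 < x < 1/3`. -/
theorem gaussian_test_fires_lower_bound (t : ℕ) (ht : 2 ≤ t)
    (δ' : ℝ) (hδ' : δ' ∈ Set.Ioo (0:ℝ) 1)
    (α : ℝ) (hα : α = Real.sqrt (Real.log (1 / δ') / ((t : ℝ) - 1)))
    (f : ℝ → ℝ)
    (hf : ∀ x : ℝ, 0 < x →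
      f x = if (1:ℝ)/3 ≤ x then Real.exp (2 * x + 1) else 1 / (1 - 2 * x))
    (μi μj V Vh mi mj : ℝ)
    (hμ : μi < μj) (hV : 0 ≤ V) (hVh : 0 ≤ Vh)
    (h1 : mj - mi ≤ (μj - μi) + α * Real.sqrt (2 * f α * Vh))
    (h2 : V ≤ f α * Vh)
    (htest : mj - mi - (3/2) * α * Real.sqrt (2 * f α * Vh) > 0) :
    (t : ℝ) - 1 ≥ (1/2) * Real.log (1 / δ') * (V / (μj - μi) ^ 2) := by
  obtain ⟨hδ0, hδ1⟩ := hδ'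
  have ht1 : (1:ℝ) ≤ (t:ℝ) - 1 := by
    have : (2:ℝ) ≤ (t:ℝ) := by exact_mod_cast ht
    linarith
  have htpos : (0:ℝ) < (t:ℝ) - 1 := by linarith
  have hL : 0 < Real.log (1/δ') := Real.log_pos (by rw [lt_div_iff₀ hδ0]; linarith)
  have hαpos : 0 < α := by
    rw [hα]; exact Real.sqrt_pos.2 (div_pos hL htpos)
  have hfpos : 0 < f α := by
    rw [hf α hαpos]
    split_ifs with h
    · exact Real.exp_pos _
    · push_neg at h
      exact div_pos one_pos (by linarith)
  have hα2 : α ^ 2 = Real.log (1/δ') / ((t:ℝ) - 1) := by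
    rw [hα, Real.sq_sqrt (le_of_lt (div_pos hL htpos))]
  have hα2' : α ^ 2 * ((t:ℝ) - 1) = Real.log (1/δ') := by
    rw [hα2]; field_simp
  have hs2 : (Real.sqrt (2 * f α * Vh)) ^ 2 = 2 * f α * Vh :=
    Real.sq_sqrt (by positivity)
  have hsnn : 0 ≤ Real.sqrt (2 * f α * Vh) := Real.sqrt_nonneg _
  have hgap : (1/2) * α * Real.sqrt (2 * f α * Vh) < μj - μi := by linarith
  have hgap2 : (1/4) * α ^ 2 * (2 * f α * Vh) ≤ (μj - μi) ^ 2 := by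
    nlinarith [mul_nonneg hαpos.le hsnn]
  have key : (1/2) * Real.log (1/δ') * V ≤ ((t:ℝ) - 1) * (μj - μi) ^ 2 := by
    nlinarith [mul_le_mul_of_nonneg_left hgap2 htpos.le,
      mul_nonneg hL.le (sub_nonneg.2 h2)]
  have hd2 : 0 < (μj - μi) ^ 2 := pow_pos (by linarith) 2
  rw [ge_iff_le, show (1/2) * Real.log (1/δ') * (V / (μj - μi) ^ 2)
      = ((1/2) * Real.log (1/δ') * V) / (μj - μi) ^ 2 from by ring,
    div_le_iff₀ hd2]
  linarith
end

section
/- Let t ≥ 2 be an integer, δ' ∈ (0,1), and α := √(log(1/δ')/(t−1)). Let μ_i < μ_j be real numbers, V > 0, V̂ ≥ 0, and m̂_i, m̂_j real numbers satisfying: (i) m̂_j − m̂_i ≥ (μ_j − μ_i) − α·√(2·f(α)·V̂), and (ii) V̂ ≤ V·(1 + 2α + 2α²). If m̂_j − m̂_i − (3/2)·α·√(2·f(α)·V̂) ≤ 0, then t − 1 ≤ 25·log(1/δ') / log(1 + (μ_j − μ_i)²/V). -/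
private lemma taylor4_le_exp {y : ℝ} (hy : 0 ≤ y) :
    1 + y + y ^ 2 / 2 + y ^ 3 / 6 ≤ Real.exp y := by
  have := Real.sum_le_exp_of_nonneg hy 4
  simp [Finset.sum_range_succ, Nat.factorial] at this
  linarith

private lemma exp_53_ge : (5 : ℝ) ≤ Real.exp (5/3) := by
  have := Real.sum_le_exp_of_nonneg (by norm_num : (0:ℝ) ≤ 5/3) 5
  simp [Finset.sum_range_succ, Nat.factorial] at this
  norm_num at this
  linarith

/-- Key inequality: `1 + (25/2) α² f(α) (1+2α+2α²) ≤ exp (25 α²)` for `α > 0`. -/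
private lemma key_ineq (α : ℝ) (hα : 0 < α) (f : ℝ → ℝ)
    (hf : ∀ x : ℝ, 0 < x →
      f x = if (1:ℝ)/3 ≤ x then Real.exp (2 * x + 1) else 1 / (1 - 2 * x)) :
    1 + 25/2 * α^2 * f α * (1 + 2*α + 2*α^2) ≤ Real.exp (25 * α^2) := by
  rw [hf α hα]
  by_cases h3 : (1:ℝ)/3 ≤ α
  · -- large α
    rw [if_pos h3]
    set y : ℝ := 25*α^2 - 2*α - 1 with hy
    have hy0 : 0 ≤ y := by nlinarith [sq_nonneg (α - 1/3)]
    have hT : 12.5*α^2*(1+2*α+2*α^2) + 1/5 ≤ 1 + y + y^2/2 + y^3/6 := by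
      rw [hy]
      nlinarith [sq_nonneg (α - 1/3), sq_nonneg α,
        pow_le_pow_left₀ (by norm_num : (0:ℝ) ≤ 1/3) h3 2,
        sq_nonneg (α^2 - 1/9), sq_nonneg (α^3)]
    have hE5 : (5:ℝ) ≤ Real.exp (2*α + 1) := by
      refine exp_53_ge.trans (Real.exp_le_exp.2 (by linarith))
    have hEpos : (0:ℝ) < Real.exp (2*α + 1) := Real.exp_pos _
    have hTy : 1 + y + y^2/2 + y^3/6 ≤ Real.exp y := taylor4_le_exp hy0
    have hA : 0 ≤ 12.5*α^2*(1+2*α+2*α^2) := by positivity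
    have h1 : 1 + Real.exp (2*α+1) * (12.5*α^2*(1+2*α+2*α^2)) ≤
        Real.exp (2*α+1) * (1 + y + y^2/2 + y^3/6) := by
      have : Real.exp (2*α+1) * (1/5) ≤
          Real.exp (2*α+1) * ((1 + y + y^2/2 + y^3/6) - 12.5*α^2*(1+2*α+2*α^2)) := by
        apply mul_le_mul_of_nonneg_left (by linarith) hEpos.le
      nlinarith
    have h2 : Real.exp (2*α+1) * (1 + y + y^2/2 + y^3/6) ≤
        Real.exp (2*α+1) * Real.exp y :=
      mul_le_mul_of_nonneg_left hTy hEpos.le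
    rw [← Real.exp_add] at h2
    have : (2*α+1) + y = 25*α^2 := by rw [hy]; ring
    rw [this] at h2
    calc 1 + 25/2 * α^2 * Real.exp (2*α+1) * (1 + 2*α + 2*α^2)
        = 1 + Real.exp (2*α+1) * (12.5*α^2*(1+2*α+2*α^2)) := by ring
      _ ≤ Real.exp (25*α^2) := h1.trans h2
  · -- small α
    rw [if_neg h3]
    push_neg at h3
    have h12 : 0 < 1 - 2*α := by linarith
    set y : ℝ := 25*α^2 with hy
    have hy0 : 0 ≤ y := by positivity
    have hpoly : 1 + 2*α + 2*α^2 ≤ (1 - 2*α) * (2 + 25*α^2 + (625/3)*α^4) := by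
      nlinarith [sq_nonneg (α - 1/6), sq_nonneg (α - 1/5), sq_nonneg α,
        mul_pos hα hα, sq_nonneg (α^2 - α/10)]
    have hdiv : 25/2 * α^2 * (1/(1-2*α)) * (1 + 2*α + 2*α^2) ≤
        y + y^2/2 + y^3/6 := by
      have heq : 25/2 * α^2 * (1/(1-2*α)) * (1 + 2*α + 2*α^2)
          = (25/2 * α^2 * (1 + 2*α + 2*α^2)) / (1-2*α) := by ring
      rw [heq, div_le_iff₀ h12]
      have hc : 0 ≤ 25/2 * α^2 := by positivity
      calc 25/2 * α^2 * (1 + 2*α + 2*α^2)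
          ≤ 25/2 * α^2 * ((1 - 2*α) * (2 + 25*α^2 + (625/3)*α^4)) :=
            mul_le_mul_of_nonneg_left hpoly hc
        _ = (y + y^2/2 + y^3/6) * (1 - 2*α) := by rw [hy]; ring
    have hTy : 1 + y + y^2/2 + y^3/6 ≤ Real.exp y := taylor4_le_exp hy0
    calc 1 + 25/2 * α^2 * (1/(1-2*α)) * (1 + 2*α + 2*α^2)
        ≤ 1 + (y + y^2/2 + y^3/6) := by linarith
      _ ≤ Real.exp y := by linarith
      _ = Real.exp (25*α^2) := by rw [hy]

/-- Gaussian case: if the pairwise test has not fired at time `t` (under the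
concentration inequalities (i), (ii)), then
`t - 1 ≤ 25 log(1/δ') / log(1 + (μⱼ-μᵢ)²/V)`. Here `f(x) = exp(2x+1)` if
`x ≥ 1/3` and `f(x) = 1/(1-2x)` if `0 < x < 1/3`. -/
theorem gaussian_test_not_fired_upper_bound (t : ℕ) (ht : 2 ≤ t)
    (δ' : ℝ) (hδ' : δ' ∈ Set.Ioo (0:ℝ) 1)
    (α : ℝ) (hα : α = Real.sqrt (Real.log (1 / δ') / ((t : ℝ) - 1)))
    (f : ℝ → ℝ)
    (hf : ∀ x : ℝ, 0 < x →
      f x = if (1:ℝ)/3 ≤ x then Real.exp (2 * x + 1) else 1 / (1 - 2 * x))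
    (μi μj V Vh mi mj : ℝ)
    (hμ : μi < μj) (hV : 0 < V) (hVh : 0 ≤ Vh)
    (h1 : mj - mi ≥ (μj - μi) - α * Real.sqrt (2 * f α * Vh))
    (h2 : Vh ≤ V * (1 + 2 * α + 2 * α ^ 2))
    (htest : mj - mi - (3/2) * α * Real.sqrt (2 * f α * Vh) ≤ 0) :
    (t : ℝ) - 1 ≤
      25 * Real.log (1 / δ') / Real.log (1 + (μj - μi) ^ 2 / V) := by
  have ht1 : (1:ℝ) ≤ (t:ℝ) - 1 := by
    have h2t : (2:ℝ) ≤ (t:ℝ) := by exact_mod_cast ht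
    linarith
  have ht0 : (0:ℝ) < (t:ℝ) - 1 := by linarith
  have hL : 0 < Real.log (1/δ') := by
    apply Real.log_pos
    rw [lt_div_iff₀ hδ'.1]
    linarith [hδ'.2]
  have hαpos : 0 < α := by
    rw [hα]
    exact Real.sqrt_pos.2 (div_pos hL ht0)
  have hα2 : α^2 * ((t:ℝ) - 1) = Real.log (1/δ') := by
    rw [hα, Real.sq_sqrt (le_of_lt (div_pos hL ht0))]
    field_simp
  -- f α positive
  have hfpos : 0 < f α := by
    rw [hf α hαpos]
    split_ifs with h
    · exact Real.exp_pos _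
    · push_neg at h
      exact div_pos one_pos (by linarith)
  have hΔ : 0 < μj - μi := by linarith
  have hSnn : 0 ≤ 2 * f α * Vh := by positivity
  have hsq : 0 ≤ Real.sqrt (2 * f α * Vh) := Real.sqrt_nonneg _
  -- Δ ≤ (5/2) α √S
  have hΔle : μj - μi ≤ (5/2) * α * Real.sqrt (2 * f α * Vh) := by linarith
  -- Δ² ≤ (25/4) α² S
  have hΔsq : (μj - μi)^2 ≤ 25/4 * α^2 * (2 * f α * Vh) := by
    have := mul_self_le_mul_self hΔ.le hΔle
    have hss : Real.sqrt (2 * f α * Vh) * Real.sqrt (2 * f α * Vh) = 2 * f α * Vh :=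
      Real.mul_self_sqrt hSnn
    nlinarith
  have hX : (μj - μi)^2 / V ≤ 25/2 * α^2 * f α * (1 + 2*α + 2*α^2) := by
    rw [div_le_iff₀ hV]
    have h2' : 2 * f α * Vh ≤ 2 * f α * (V * (1 + 2*α + 2*α^2)) := by
      apply mul_le_mul_of_nonneg_left h2 (by positivity)
    nlinarith [sq_nonneg α, hΔsq]
  have hXpos : 0 < (μj - μi)^2 / V := div_pos (by positivity) hV
  have hlogpos : 0 < Real.log (1 + (μj - μi)^2 / V) := Real.log_pos (by linarith)
  rw [ge_iff_le, le_div_iff₀ hlogpos] at *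
  -- goal : ((t:ℝ)-1) * log(1 + Δ²/V) ≤ 25 * log(1/δ')
  have hkey := key_ineq α hαpos f hf
  have hlogle : Real.log (1 + (μj - μi)^2 / V) ≤ 25 * α^2 := by
    have h1X : 0 < 1 + (μj - μi)^2 / V := by linarith
    calc Real.log (1 + (μj - μi)^2 / V)
        ≤ Real.log (1 + 25/2 * α^2 * f α * (1 + 2*α + 2*α^2)) :=
          Real.log_le_log h1X (by linarith)
      _ ≤ Real.log (Real.exp (25 * α^2)) :=
          Real.log_le_log (by linarith) hkey
      _ = 25 * α^2 := Real.log_exp _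
  calc ((t:ℝ) - 1) * Real.log (1 + (μj - μi)^2 / V)
      ≤ ((t:ℝ) - 1) * (25 * α^2) :=
        mul_le_mul_of_nonneg_left hlogle ht0.le
    _ = 25 * Real.log (1/δ') := by rw [← hα2]; ring
end

section
/- Let μ₁, μ ∈ (0,1) with μ < μ₁, and let V be a real number satisfying (μ₁ − μ) − (μ₁ − μ)² ≤ V ≤ μ₁ + μ − μ₁² − μ². Define b := (V − (μ₁ − μ) + (μ₁ − μ)²) / (2(1 − μ₁)) and a := (μ − b)/(1 − b). Then 0 ≤ b ≤ μ and 0 ≤ a ≤ μ ≤ μ₁. Moreover, if U and W are independent random variables each uniformly distributed on [0,1], and X₁ := 𝟙(U ≤ μ₁), X := 𝟙(U ≤ a or W ≤ b), then X₁ and X are {0,1}-valued with E[X₁] = μ₁, E[X] = a + b − ab = μ, and Var(X₁ − X) = V. -/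
/-!
Put `S = {U ≤ μ₁}` and `T = {U ≤ a} ∪ {W ≤ b}`, so that `X₁ = 𝟙_S` and `X = 𝟙_T`. As `a ≤ μ₁`, the
events `S \ T = {a < U ≤ μ₁, b < W}` and `T \ S = {μ₁ < U, W ≤ b}` are product events, and
`(X₁ - X)² = 𝟙_{S \ T} + 𝟙_{T \ S}` has mean `(μ₁ - a)(1 - b) + (1 - μ₁) b` by independence.
With `a (1 - b) = μ - b` this is `μ₁ - μ + 2 b (1 - μ₁)`, and `b` is chosen to make it
`V + (μ₁ - μ)²`.
-/

open MeasureTheory ProbabilityTheory Set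

section Uniform

variable {Ω : Type*} [MeasurableSpace Ω] {P : Measure Ω} {U : Ω → ℝ}

lemma measureReal_preimage_Iic_of_uniform (hUm : Measurable U)
    (hU : P.map U = volume.restrict (Icc 0 1)) {c : ℝ} (hc₀ : 0 ≤ c) (hc₁ : c ≤ 1) :
    P.real (U ⁻¹' Iic c) = c := by
  have hcap : Iic c ∩ Icc 0 1 = Icc 0 c := by
    rw [inter_comm, ← Ici_inter_Iic, inter_assoc, Iic_inter_Iic, inf_eq_right.mpr hc₁,
      Ici_inter_Iic]
  rw [← map_measureReal_apply hUm measurableSet_Iic, hU,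
    measureReal_restrict_apply measurableSet_Iic, hcap, Real.volume_real_Icc_of_le hc₀, sub_zero]

variable [IsProbabilityMeasure P]

lemma measureReal_preimage_Ioi_of_uniform (hUm : Measurable U)
    (hU : P.map U = volume.restrict (Icc 0 1)) {c : ℝ} (hc₀ : 0 ≤ c) (hc₁ : c ≤ 1) :
    P.real (U ⁻¹' Ioi c) = 1 - c := by
  rw [← compl_Iic, preimage_compl, probReal_compl_eq_one_sub (hUm measurableSet_Iic),
    measureReal_preimage_Iic_of_uniform hUm hU hc₀ hc₁]

lemma measureReal_preimage_Ioc_of_uniform (hUm : Measurable U)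
    (hU : P.map U = volume.restrict (Icc 0 1)) {c d : ℝ} (hc₀ : 0 ≤ c) (hcd : c ≤ d)
    (hd₁ : d ≤ 1) :
    P.real (U ⁻¹' Ioc c d) = d - c := by
  rw [← Ioi_inter_Iic, inter_comm, ← compl_Iic, ← sdiff_eq, preimage_sdiff,
    measureReal_sdiff (preimage_mono (Iic_subset_Iic.mpr hcd)) (hUm measurableSet_Iic),
    measureReal_preimage_Iic_of_uniform hUm hU (hc₀.trans hcd) hd₁,
    measureReal_preimage_Iic_of_uniform hUm hU hc₀ (hcd.trans hd₁)]

end Uniform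

section Independence

variable {Ω β γ : Type*} [MeasurableSpace Ω] [MeasurableSpace β] [MeasurableSpace γ]
  {P : Measure Ω} {U : Ω → β} {W : Ω → γ} {s : Set β} {t : Set γ}

lemma ProbabilityTheory.IndepFun.measureReal_inter_preimage_eq_mul (hUW : IndepFun U W P)
    (hs : MeasurableSet s) (ht : MeasurableSet t) :
    P.real (U ⁻¹' s ∩ W ⁻¹' t) = P.real (U ⁻¹' s) * P.real (W ⁻¹' t) := by
  simp only [measureReal_def, hUW.measure_inter_preimage_eq_mul _ _ hs ht, ENNReal.toReal_mul]

lemma ProbabilityTheory.IndepFun.measureReal_preimage_union [IsFiniteMeasure P]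
    (hUW : IndepFun U W P) (hWm : Measurable W) (hs : MeasurableSet s) (ht : MeasurableSet t) :
    P.real (U ⁻¹' s ∪ W ⁻¹' t) =
      P.real (U ⁻¹' s) + P.real (W ⁻¹' t) - P.real (U ⁻¹' s) * P.real (W ⁻¹' t) := by
  rw [← hUW.measureReal_inter_preimage_eq_mul hs ht]
  linarith [measureReal_union_add_inter (μ := P) (s := U ⁻¹' s) (hWm ht)]

end Independence

lemma variance_indicator_sub_indicator {Ω : Type*} [MeasurableSpace Ω] {P : Measure Ω}
    [IsProbabilityMeasure P] {S T : Set Ω} (hS : MeasurableSet S) (hT : MeasurableSet T) :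
    variance (S.indicator 1 - T.indicator 1) P =
      P.real (S \ T) + P.real (T \ S) - (P.real S - P.real T) ^ 2 := by
  have hLp : ∀ {R : Set Ω}, MeasurableSet R → MemLp (R.indicator (1 : Ω → ℝ)) 2 P :=
    fun hR => memLp_indicator_const 2 hR 1 (Or.inr (measure_ne_top P _))
  have hsq : (S.indicator 1 - T.indicator 1) ^ 2 =
      (S \ T).indicator (1 : Ω → ℝ) + (T \ S).indicator 1 := by
    ext ω
    by_cases hωS : ω ∈ S <;> by_cases hωT : ω ∈ T <;> simp [hωS, hωT]
  rw [variance_eq_sub ((hLp hS).sub (hLp hT)), hsq,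
    integral_add' ((hLp (hS.diff hT)).integrable one_le_two)
      ((hLp (hT.diff hS)).integrable one_le_two),
    integral_sub' ((hLp hS).integrable one_le_two) ((hLp hT).integrable one_le_two),
    integral_indicator_one hS, integral_indicator_one hT, integral_indicator_one (hS.diff hT),
    integral_indicator_one (hT.diff hS)]

lemma coupling_offset_mem_Icc {μ₁ μ V : ℝ} (hμ₁ : μ₁ < 1)
    (hV1 : (μ₁ - μ) - (μ₁ - μ) ^ 2 ≤ V) (hV2 : V ≤ μ₁ + μ - μ₁ ^ 2 - μ ^ 2) :
    (V - (μ₁ - μ) + (μ₁ - μ) ^ 2) / (2 * (1 - μ₁)) ∈ Icc 0 μ := by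
  have hd : 0 < 2 * (1 - μ₁) := by linarith
  exact ⟨div_nonneg (by linarith) hd.le, (div_le_iff₀ hd).mpr (by linarith)⟩

lemma sub_div_one_sub_mem_Icc {μ b : ℝ} (hb : b ∈ Icc 0 μ) (hμ : μ < 1) :
    (μ - b) / (1 - b) ∈ Icc 0 μ := by
  have hd : 0 < 1 - b := by linarith [hb.2]
  exact ⟨div_nonneg (by linarith [hb.2]) hd.le, (div_le_iff₀ hd).mpr (by nlinarith [hb.1])⟩

lemma sub_div_one_sub_add_sub_mul {μ b : ℝ} (hb : b ≠ 1) :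
    (μ - b) / (1 - b) + b - (μ - b) / (1 - b) * b = μ := by
  have hd : 1 - b ≠ 0 := sub_ne_zero.mpr hb.symm
  field_simp
  ring

section Preimage

variable {Ω : Type*} (U W : Ω → ℝ) {a b c : ℝ}

lemma preimage_Iic_sdiff_union :
    U ⁻¹' Iic c \ (U ⁻¹' Iic a ∪ W ⁻¹' Iic b) = U ⁻¹' Ioc a c ∩ W ⁻¹' Ioi b := by
  ext ω
  simp only [mem_sdiff, mem_union, mem_inter_iff, mem_preimage, mem_Iic, mem_Ioc, mem_Ioi, not_or,
    not_le]
  tauto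

lemma union_sdiff_preimage_Iic (hac : a ≤ c) :
    (U ⁻¹' Iic a ∪ W ⁻¹' Iic b) \ U ⁻¹' Iic c = U ⁻¹' Ioi c ∩ W ⁻¹' Iic b := by
  ext ω
  simp only [mem_sdiff, mem_union, mem_inter_iff, mem_preimage, mem_Iic, mem_Ioi, not_le]
  constructor
  · rintro ⟨hU | hW, hcU⟩
    · exact absurd (hU.trans hac) hcU.not_ge
    · exact ⟨hcU, hW⟩
  · rintro ⟨hcU, hW⟩
    exact ⟨Or.inr hW, hcU⟩

end Preimage

section Coupling

variable {Ω : Type*} [MeasurableSpace Ω] {P : Measure Ω} [IsProbabilityMeasure P] {U W : Ω → ℝ}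
  {a b c : ℝ}

lemma measureReal_coupling_union (hUm : Measurable U) (hWm : Measurable W)
    (hUW : IndepFun U W P) (hU : P.map U = volume.restrict (Icc 0 1))
    (hW : P.map W = volume.restrict (Icc 0 1))
    (ha₀ : 0 ≤ a) (ha₁ : a ≤ 1) (hb₀ : 0 ≤ b) (hb₁ : b ≤ 1) :
    P.real (U ⁻¹' Iic a ∪ W ⁻¹' Iic b) = a + b - a * b := by
  rw [hUW.measureReal_preimage_union hWm measurableSet_Iic measurableSet_Iic,
    measureReal_preimage_Iic_of_uniform hUm hU ha₀ ha₁,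
    measureReal_preimage_Iic_of_uniform hWm hW hb₀ hb₁]

lemma variance_coupling (hUm : Measurable U) (hWm : Measurable W)
    (hUW : IndepFun U W P) (hU : P.map U = volume.restrict (Icc 0 1))
    (hW : P.map W = volume.restrict (Icc 0 1))
    (ha₀ : 0 ≤ a) (hac : a ≤ c) (hc₁ : c ≤ 1) (hb₀ : 0 ≤ b) (hb₁ : b ≤ 1) :
    variance ((U ⁻¹' Iic c).indicator 1 - (U ⁻¹' Iic a ∪ W ⁻¹' Iic b).indicator 1) P =
      (c - a) * (1 - b) + (1 - c) * b - (c - (a + b - a * b)) ^ 2 := by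
  have hIic : ∀ {d : ℝ}, MeasurableSet (U ⁻¹' Iic d) := hUm measurableSet_Iic
  rw [variance_indicator_sub_indicator hIic (hIic.union (hWm measurableSet_Iic)),
    preimage_Iic_sdiff_union, union_sdiff_preimage_Iic U W hac,
    hUW.measureReal_inter_preimage_eq_mul measurableSet_Ioc measurableSet_Ioi,
    hUW.measureReal_inter_preimage_eq_mul measurableSet_Ioi measurableSet_Iic,
    measureReal_preimage_Ioc_of_uniform hUm hU ha₀ hac hc₁,
    measureReal_preimage_Ioi_of_uniform hWm hW hb₀ hb₁,
    measureReal_preimage_Ioi_of_uniform hUm hU (ha₀.trans hac) hc₁,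
    measureReal_preimage_Iic_of_uniform hWm hW hb₀ hb₁,
    measureReal_preimage_Iic_of_uniform hUm hU (ha₀.trans hac) hc₁,
    measureReal_coupling_union hUm hWm hUW hU hW ha₀ (hac.trans hc₁) hb₀ hb₁]

end Coupling

/-- Construction of a pair of correlated Bernoulli variables with prescribed
means `μ₁ > μ` and prescribed variance `V` of the difference, from two
independent uniform variables `U, W` on `[0,1]`. -/
theorem bernoulli_coupling_construction {Ω : Type*} [MeasurableSpace Ω]
    (P : Measure Ω) [IsProbabilityMeasure P]
    (μ₁ μ : ℝ) (hμ₁ : μ₁ ∈ Set.Ioo (0:ℝ) 1) (hμ : μ ∈ Set.Ioo (0:ℝ) 1)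
    (hlt : μ < μ₁)
    (V : ℝ)
    (hV1 : (μ₁ - μ) - (μ₁ - μ) ^ 2 ≤ V)
    (hV2 : V ≤ μ₁ + μ - μ₁ ^ 2 - μ ^ 2)
    (b a : ℝ)
    (hb : b = (V - (μ₁ - μ) + (μ₁ - μ) ^ 2) / (2 * (1 - μ₁)))
    (ha : a = (μ - b) / (1 - b))
    (U W : Ω → ℝ) (hUmeas : Measurable U) (hWmeas : Measurable W)
    (hUW : IndepFun U W P)
    (hU : Measure.map U P = volume.restrict (Set.Icc (0:ℝ) 1))
    (hW : Measure.map W P = volume.restrict (Set.Icc (0:ℝ) 1))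
    (X₁ X : Ω → ℝ)
    (hX₁ : ∀ ω, X₁ ω = if U ω ≤ μ₁ then 1 else 0)
    (hX : ∀ ω, X ω = if (U ω ≤ a ∨ W ω ≤ b) then 1 else 0) :
    0 ≤ b ∧ b ≤ μ ∧ 0 ≤ a ∧ a ≤ μ ∧ μ ≤ μ₁ ∧
    (∀ ω, X₁ ω = 0 ∨ X₁ ω = 1) ∧ (∀ ω, X ω = 0 ∨ X ω = 1) ∧
    (∫ ω, X₁ ω ∂P) = μ₁ ∧
    (∫ ω, X ω ∂P) = a + b - a * b ∧
    a + b - a * b = μ ∧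
    variance (fun ω => X₁ ω - X ω) P = V := by
  obtain ⟨hμ₁0, hμ₁1⟩ := hμ₁
  have hμ1 : μ < 1 := hμ.2
  obtain ⟨hb0, hbμ⟩ : b ∈ Icc 0 μ := hb ▸ coupling_offset_mem_Icc hμ₁1 hV1 hV2
  obtain ⟨ha0, haμ⟩ : a ∈ Icc 0 μ := ha ▸ sub_div_one_sub_mem_Icc ⟨hb0, hbμ⟩ hμ1
  have hab : a + b - a * b = μ := ha ▸ sub_div_one_sub_add_sub_mul (by linarith)
  have hbV : 2 * b * (1 - μ₁) = V - (μ₁ - μ) + (μ₁ - μ) ^ 2 := by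
    rw [hb]; field_simp
  have hX₁S : X₁ = (U ⁻¹' Iic μ₁).indicator 1 := funext fun ω => by
    by_cases h : U ω ≤ μ₁ <;> simp [hX₁, h]
  have hXT : X = (U ⁻¹' Iic a ∪ W ⁻¹' Iic b).indicator 1 := funext fun ω => by
    by_cases h : U ω ≤ a ∨ W ω ≤ b <;> simp [hX, h]
  refine ⟨hb0, hbμ, ha0, haμ, hlt.le, fun ω => hX₁S ▸ indicator_eq_zero_or_self _ _ ω,
    fun ω => hXT ▸ indicator_eq_zero_or_self _ _ ω, ?_, ?_, hab, ?_⟩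
  · rw [hX₁S, integral_indicator_one (hUmeas measurableSet_Iic),
      measureReal_preimage_Iic_of_uniform hUmeas hU hμ₁0.le hμ₁1.le]
  · rw [hXT, integral_indicator_one ((hUmeas measurableSet_Iic).union (hWmeas measurableSet_Iic)),
      measureReal_coupling_union hUmeas hWmeas hUW hU hW ha0 (by linarith) hb0 (by linarith)]
  · change variance (X₁ - X) P = V
    rw [hX₁S, hXT, variance_coupling hUmeas hWmeas hUW hU hW ha0 (by linarith) hμ₁1.le hb0
      (by linarith), hab]
    linear_combination (-1 : ℝ) * hab + hbV
end
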